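/- A classical source between Bob and Charlie prohibits the symmetric conditional CHSH violation: if p is in S1^[AB^O BC^L] and pA(a|x) := sum_{b,c} p(a,b,c|x,z) is strictly positive for all a,x (for p in S1^[AB^O BC^L] this marginal is automatically independent of z), then for each x in {0,1} the conditional CHSH value satisfies |CHSH'^x(p)| <= 2. -/
import Mathlib


open Finset

/-- A correlation in the minimal 3-chain scenario: `p a b c x z = p(a,b,c|x,z)`. -/
abbrev Corr : Type := Fin 2 → Fin 2 → Fin 2 → Fin 2 → Fin 2 → ℝ

/-- `p` is a valid correlation: nonnegative and normalized for every input pair. -/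
def IsCorrelation (p : Corr) : Prop :=
  (∀ a b c x z, 0 ≤ p a b c x z) ∧
  (∀ x z, ∑ a : Fin 2, ∑ b : Fin 2, ∑ c : Fin 2, p a b c x z = 1)

/-- Probability weights on the finite set `Fin n`. -/
def IsWeights {n : ℕ} (q : Fin n → ℝ) : Prop :=
  (∀ l, 0 ≤ q l) ∧ ∑ l, q l = 1

/-- A no-signalling box with binary outputs and input sets `X`, `Y`. -/
def IsNSBox {X Y : Type} [Fintype X] [Fintype Y]
    (nb : Fin 2 → Fin 2 → X → Y → ℝ) : Prop :=
  (∀ o1 o2 x y, 0 ≤ nb o1 o2 x y) ∧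
  (∀ x y, ∑ o1 : Fin 2, ∑ o2 : Fin 2, nb o1 o2 x y = 1) ∧
  (∀ o1 x y y', ∑ o2 : Fin 2, nb o1 o2 x y = ∑ o2 : Fin 2, nb o1 o2 x y') ∧
  (∀ o2 x x' y, ∑ o1 : Fin 2, nb o1 o2 x y = ∑ o1 : Fin 2, nb o1 o2 x' y)

/-- `S0`: classical 3-chain correlations. -/
def MemS0 (p : Corr) : Prop :=
  ∃ (n1 n2 : ℕ) (q1 : Fin n1 → ℝ) (q2 : Fin n2 → ℝ)
    (pA : Fin 2 → Fin 2 → Fin n1 → ℝ)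
    (pB : Fin 2 → Fin n1 → Fin n2 → ℝ)
    (pC : Fin 2 → Fin 2 → Fin n2 → ℝ),
    IsWeights q1 ∧ IsWeights q2 ∧
    (∀ a x l1, 0 ≤ pA a x l1) ∧ (∀ x l1, ∑ a : Fin 2, pA a x l1 = 1) ∧
    (∀ b l1 l2, 0 ≤ pB b l1 l2) ∧ (∀ l1 l2, ∑ b : Fin 2, pB b l1 l2 = 1) ∧
    (∀ c z l2, 0 ≤ pC c z l2) ∧ (∀ z l2, ∑ c : Fin 2, pC c z l2 = 1) ∧
    (∀ a b c x z, p a b c x z =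
      ∑ l1, ∑ l2, q1 l1 * q2 l2 * pA a x l1 * pB b l1 l2 * pC c z l2)

/-- `S1^[AB^O BC^L]`: a no-signalling (OPT) source between Alice and Bob,
a classical source between Bob and Charlie. -/
def MemS1ABo (p : Corr) : Prop :=
  ∃ (n : ℕ) (q : Fin n → ℝ)
    (nb : Fin 2 → Fin 2 → Fin 2 → Fin n → ℝ)
    (pC : Fin 2 → Fin 2 → Fin n → ℝ),
    IsWeights q ∧ IsNSBox nb ∧
    (∀ c z l, 0 ≤ pC c z l) ∧ (∀ z l, ∑ c : Fin 2, pC c z l = 1) ∧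
    (∀ a b c x z, p a b c x z = ∑ l, q l * nb a b x l * pC c z l)

/-- `S1^[AB^L BC^O]`: a classical source between Alice and Bob,
a no-signalling (OPT) source between Bob and Charlie. -/
def MemS1BCo (p : Corr) : Prop :=
  ∃ (n : ℕ) (q : Fin n → ℝ)
    (pA : Fin 2 → Fin 2 → Fin n → ℝ)
    (nb : Fin 2 → Fin 2 → Fin n → Fin 2 → ℝ),
    IsWeights q ∧
    (∀ a x l, 0 ≤ pA a x l) ∧ (∀ x l, ∑ a : Fin 2, pA a x l = 1) ∧
    IsNSBox nb ∧
    (∀ a b c x z, p a b c x z = ∑ l, q l * pA a x l * nb b c l z)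

/-- `S2`: the no-signalling constraints of the 3-chain network. -/
def MemS2 (p : Corr) : Prop :=
  (∃ (pA : Fin 2 → Fin 2 → ℝ) (pC : Fin 2 → Fin 2 → ℝ),
    (∀ a x, 0 ≤ pA a x) ∧ (∀ x, ∑ a : Fin 2, pA a x = 1) ∧
    (∀ c z, 0 ≤ pC c z) ∧ (∀ z, ∑ c : Fin 2, pC c z = 1) ∧
    (∀ a c x z, ∑ b : Fin 2, p a b c x z = pA a x * pC c z)) ∧
  (∀ a b x z z', ∑ c : Fin 2, p a b c x z = ∑ c : Fin 2, p a b c x z') ∧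
  (∀ b c x x' z, ∑ a : Fin 2, p a b c x z = ∑ a : Fin 2, p a b c x' z)

/-- Conditional correlator on Alice's side:
`F^x_{a,z} = ∑_{b,c} (-1)^{b+c} p(a,b,c|x,z) / pA(a|x)`, where
`pA(a|x) = ∑_{b,c} p(a,b,c|x,z)` (independent of `z` for the sets considered). -/
noncomputable def Fcorr (p : Corr) (x a z : Fin 2) : ℝ :=
  (∑ b : Fin 2, ∑ c : Fin 2, (-1 : ℝ) ^ ((b : ℕ) + (c : ℕ)) * p a b c x z) /
    (∑ b : Fin 2, ∑ c : Fin 2, p a b c x z)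

/-- Conditional CHSH value `CHSH'^x(p) = F^x_{0,0} + F^x_{0,1} + F^x_{1,0} - F^x_{1,1}`. -/
noncomputable def CHSHonA (p : Corr) (x : Fin 2) : ℝ :=
  Fcorr p x 0 0 + Fcorr p x 0 1 + Fcorr p x 1 0 - Fcorr p x 1 1

/-- a classical source between Bob and Charlie prohibits the
symmetric conditional CHSH violation: `p ∈ S1^[AB^O BC^L]` with positive Alice
marginal implies `|CHSH'^x(p)| ≤ 2`. -/
theorem s1ABo_conditional_CHSH (p : Corr) (hp : IsCorrelation p) (h : MemS1ABo p)
    (hpos : ∀ a x z : Fin 2, 0 < ∑ b : Fin 2, ∑ c : Fin 2, p a b c x z) :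
    ∀ x : Fin 2, |CHSHonA p x| ≤ 2 := by
  intro x
  obtain ⟨n, q, nb, pC, ⟨hq0, hq1⟩, ⟨hnb0, hnb1, hnsA, hnsB⟩, hpC0, hpC1, hrep⟩ := h
  have hn : 0 < n := by
    rcases Nat.eq_zero_or_pos n with h0 | h0
    · exfalso; subst h0; simpa using hq1
    · exact h0
  set l₀ : Fin n := ⟨0, hn⟩ with hl₀
  set N : Fin 2 → ℝ := fun a => ∑ b : Fin 2, nb a b x l₀ with hNdef
  set m : Fin 2 → Fin n → ℝ := fun a l => nb a 0 x l - nb a 1 x l with hmdef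
  set C : Fin 2 → Fin n → ℝ := fun z l => pC 0 z l - pC 1 z l with hCdef
  have hNA : ∀ a l, nb a 0 x l + nb a 1 x l = N a := by
    intro a l
    have := hnsA a x l l₀
    simpa [hNdef, Fin.sum_univ_two] using this
  have hpCsum : ∀ z l, pC 0 z l + pC 1 z l = 1 := by
    intro z l
    have := hpC1 z l
    simpa [Fin.sum_univ_two] using this
  have hden : ∀ (a z : Fin 2), (∑ b : Fin 2, ∑ c : Fin 2, p a b c x z) = N a := by
    intro a z
    have step : (∑ b : Fin 2, ∑ c : Fin 2, p a b c x z)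
        = ∑ l, q l * ((nb a 0 x l + nb a 1 x l) * (pC 0 z l + pC 1 z l)) := by
      simp only [hrep, Fin.sum_univ_two]
      rw [← Finset.sum_add_distrib, ← Finset.sum_add_distrib, ← Finset.sum_add_distrib]
      exact Finset.sum_congr rfl fun l _ => by ring
    rw [step]
    calc (∑ l, q l * ((nb a 0 x l + nb a 1 x l) * (pC 0 z l + pC 1 z l)))
        = ∑ l, q l * N a := by
          exact Finset.sum_congr rfl fun l _ => by rw [hNA a l, hpCsum z l, mul_one]
      _ = (∑ l, q l) * N a := by rw [Finset.sum_mul]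
      _ = N a := by rw [hq1, one_mul]
  have hnum : ∀ (a z : Fin 2),
      (∑ b : Fin 2, ∑ c : Fin 2, (-1 : ℝ) ^ ((b : ℕ) + (c : ℕ)) * p a b c x z)
        = ∑ l, q l * (m a l * C z l) := by
    intro a z
    simp only [hrep, Fin.sum_univ_two, Fin.val_zero, Fin.val_one, pow_zero, pow_one,
      Nat.add_zero, Nat.zero_add, one_mul, neg_one_mul, neg_mul, pow_succ, pow_zero,
      neg_neg, Finset.mul_sum, ← Finset.sum_neg_distrib]
    rw [← Finset.sum_add_distrib, ← Finset.sum_add_distrib, ← Finset.sum_add_distrib]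
    exact Finset.sum_congr rfl fun l _ => by simp only [hmdef, hCdef]; ring
  have hNpos : ∀ a : Fin 2, 0 < N a := fun a => hden a 0 ▸ hpos a x 0
  have hFcorr : ∀ (a z : Fin 2), Fcorr p x a z = ∑ l, q l * (m a l * C z l) / N a := by
    intro a z
    rw [Fcorr, hnum a z, hden a z, Finset.sum_div]
  have hchsh : CHSHonA p x = ∑ l, q l *
      (m 0 l / N 0 * (C 0 l + C 1 l) + m 1 l / N 1 * (C 0 l - C 1 l)) := by
    rw [CHSHonA, hFcorr, hFcorr, hFcorr, hFcorr,
      ← Finset.sum_add_distrib, ← Finset.sum_add_distrib, ← Finset.sum_sub_distrib]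
    exact Finset.sum_congr rfl fun l _ => by ring
  have hmle : ∀ (a : Fin 2) l, |m a l| ≤ N a := by
    intro a l
    rw [abs_le]
    have h0 := hnb0 a 0 x l
    have h1 := hnb0 a 1 x l
    have := hNA a l
    constructor <;> simp only [hmdef] <;> linarith
  have hCle : ∀ (z : Fin 2) l, |C z l| ≤ 1 := by
    intro z l
    rw [abs_le]
    have h0 := hpC0 0 z l
    have h1 := hpC0 1 z l
    have := hpCsum z l
    constructor <;> simp only [hCdef] <;> linarith
  rw [hchsh]
  have key : ∀ l, |m 0 l / N 0 * (C 0 l + C 1 l) + m 1 l / N 1 * (C 0 l - C 1 l)| ≤ 2 := by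
    intro l
    have hα : |m 0 l / N 0| ≤ 1 := by
      rw [abs_div, abs_of_pos (hNpos 0), div_le_one (hNpos 0)]; exact hmle 0 l
    have hβ : |m 1 l / N 1| ≤ 1 := by
      rw [abs_div, abs_of_pos (hNpos 1), div_le_one (hNpos 1)]; exact hmle 1 l
    have hc0 := abs_le.mp (hCle 0 l)
    have hc1 := abs_le.mp (hCle 1 l)
    have hsum : |C 0 l + C 1 l| + |C 0 l - C 1 l| ≤ 2 := by
      rcases abs_cases (C 0 l + C 1 l) with ⟨e1, s1⟩ | ⟨e1, s1⟩ <;>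
        rcases abs_cases (C 0 l - C 1 l) with ⟨e2, s2⟩ | ⟨e2, s2⟩ <;>
        rw [e1, e2] <;> linarith [hc0.1, hc0.2, hc1.1, hc1.2]
    calc |m 0 l / N 0 * (C 0 l + C 1 l) + m 1 l / N 1 * (C 0 l - C 1 l)|
        ≤ |m 0 l / N 0 * (C 0 l + C 1 l)| + |m 1 l / N 1 * (C 0 l - C 1 l)| := abs_add_le _ _
      _ = |m 0 l / N 0| * |C 0 l + C 1 l| + |m 1 l / N 1| * |C 0 l - C 1 l| := by
          rw [abs_mul, abs_mul]
      _ ≤ 1 * |C 0 l + C 1 l| + 1 * |C 0 l - C 1 l| :=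
          add_le_add (mul_le_mul_of_nonneg_right hα (abs_nonneg _))
            (mul_le_mul_of_nonneg_right hβ (abs_nonneg _))
      _ ≤ 2 := by rw [one_mul, one_mul]; exact hsum
  calc |∑ l, q l * (m 0 l / N 0 * (C 0 l + C 1 l) + m 1 l / N 1 * (C 0 l - C 1 l))|
      ≤ ∑ l, |q l * (m 0 l / N 0 * (C 0 l + C 1 l) + m 1 l / N 1 * (C 0 l - C 1 l))| :=
        Finset.abs_sum_le_sum_abs _ _
    _ ≤ ∑ l, q l * 2 := by
        apply Finset.sum_le_sum
        intro l _
        rw [abs_mul, abs_of_nonneg (hq0 l)]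
        exact mul_le_mul_of_nonneg_left (key l) (hq0 l)
    _ = 2 := by rw [← Finset.sum_mul, hq1, one_mul]
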